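/- In the Clifford algebra of a quadratic form Q on a K-vector space V (char K = 0), for any vectors v₁, …, vₙ ∈ V and any i, one has ι(vᵢ)·Sₙ(ι(v₁),…,ι(vₙ)) = (−1)^{n−1}·Sₙ(ι(v₁),…,ι(vₙ))·ι(vᵢ), where Sₙ is the standard polynomial. -/

import Mathlib

/-!
Let `P m := stdPolyInsertAt x y m`, the signed sum over `σ` of the words `y (σ 0) ⋯ y (σ (n-1))`
with `x` inserted at position `m`; so `P 0 = x * Sₙ(y)` and `P n = Sₙ(y) * x`. If every
`x * y j + y j * x` is central, it can be pulled out of `P k + P (k+1)`, and reindexing by a cycle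
gives `P k + P (k+1) = (-1)^k D` with `D` independent of `k`: the terms `(-1)^m P m` form an
arithmetic progression. Their sum is `Sₙ₊₁(x, y₁, …, yₙ)`, which vanishes when `x = y i` occurs
twice, and an arithmetic progression with vanishing sum in a torsion-free group has opposite
extreme terms (pair `m` with `n - m`). Hence `P 0 = (-1)^(n-1) P n`.
-/

/-- The standard polynomial `Sₙ` evaluated at `v₁, …, vₙ`. -/
def stdPoly {A : Type*} [Ring A] (n : ℕ) (v : Fin n → A) : A :=
  ∑ σ : Equiv.Perm (Fin n),
    ((Equiv.Perm.sign σ : ℤ) • (List.ofFn fun i => v (σ i)).prod)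

open Equiv Equiv.Perm

theorem apply_zero_add_apply_last_eq_zero_of_sum_eq_zero {M : Type*} [AddCommGroup M]
    [IsAddTorsionFree M] {N : ℕ} (Q : Fin (N + 1) → M) (d : M)
    (hd : ∀ k : Fin N, Q k.castSucc - Q k.succ = d) (hsum : ∑ m, Q m = 0) :
    Q 0 + Q (Fin.last N) = 0 := by
  have hQ : ∀ m : Fin (N + 1), Q m = Q 0 - (m : ℕ) • d := by
    refine Fin.induction (by simp) fun k ih => ?_
    rw [← sub_sub_cancel (Q k.castSucc) (Q k.succ), hd k, ih, Fin.val_succ, Fin.val_castSucc,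
      succ_nsmul, sub_sub]
  have hpair : ∀ m : Fin (N + 1), Q m + Q m.rev = Q 0 + Q (Fin.last N) := by
    intro m
    have hm : N • d = (m : ℕ) • d + (m.rev : ℕ) • d := by
      rw [← add_nsmul, Fin.val_rev]; congr 1; omega
    rw [hQ m, hQ m.rev, hQ (Fin.last N), Fin.val_last, hm]
    abel
  have htwice : (N + 1) • (Q 0 + Q (Fin.last N)) = 2 • ∑ m, Q m := by
    rw [two_nsmul]
    nth_rw 2 [← Equiv.sum_comp Fin.revPerm]
    simp [← Finset.sum_add_distrib, hpair]
  rw [hsum, smul_zero] at htwice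
  exact nsmul_right_injective N.succ_ne_zero (htwice.trans (smul_zero _).symm)

theorem List.prod_ofFn_insertNth_castSucc_add_succ {A : Type*} [Ring A] (x : A) {n : ℕ}
    (f : Fin (n + 1) → A) (k : Fin (n + 1)) (hk : x * f k + f k * x ∈ Set.center A) :
    (List.ofFn (k.castSucc.insertNth x f)).prod + (List.ofFn (k.succ.insertNth x f)).prod =
      (x * f k + f k * x) * (List.ofFn (f ∘ k.succAbove)).prod := by
  have hzero : ∀ {m : ℕ} (g : Fin (m + 1) → A),
      (List.ofFn ((0 : Fin (m + 1)).castSucc.insertNth x g)).prod +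
        (List.ofFn ((0 : Fin (m + 1)).succ.insertNth x g)).prod =
      (x * g 0 + g 0 * x) * (List.ofFn (g ∘ Fin.succAbove 0)).prod := by
    intro m g
    rw [← Fin.cons_self_tail g, Fin.insertNth_succ_cons, Fin.castSucc_zero, Fin.insertNth_zero',
      Fin.insertNth_zero', Fin.succAbove_zero]
    simp only [List.ofFn_cons, List.prod_cons, Fin.cons_zero, Fin.cons_comp_succ]
    noncomm_ring
  induction n with
  | zero => obtain rfl := Fin.fin_one_eq_zero k; exact hzero f
  | succ n ih =>
    cases k using Fin.cases with
    | zero => exact hzero f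
    | succ j =>
      have hsplit : f ∘ j.succ.succAbove = Fin.cons (f 0) (Fin.tail f ∘ j.succAbove) := by
        ext t
        cases t using Fin.cases <;> simp [Fin.succ_succAbove_succ, Fin.tail]
      rw [hsplit, ← Fin.cons_self_tail f, Fin.castSucc_succ, Fin.insertNth_succ_cons,
        Fin.insertNth_succ_cons]
      simp only [List.ofFn_cons, List.prod_cons, Fin.cons_succ, Fin.tail_cons]
      rw [← mul_add, ih (Fin.tail f) j hk, ← mul_assoc, ← mul_assoc, Fin.cons_zero]
      exact congrArg (· * _) (hk.comm (f 0)).eq.symm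

theorem bijective_decomposeFin_symm_zero_mul_cycleRange (n : ℕ) :
    Function.Bijective fun p : Fin (n + 1) × Perm (Fin n) =>
      decomposeFin.symm (0, p.2) * p.1.cycleRange := by
  refine (Fintype.bijective_iff_injective_and_card _).2
    ⟨?_, by simp [Fintype.card_perm, Nat.factorial_succ]⟩
  rintro ⟨m, σ⟩ ⟨m', σ'⟩ h
  have hm : ∀ (m : Fin (n + 1)) (σ : Perm (Fin n)),
      (decomposeFin.symm (0, σ) * m.cycleRange).symm 0 = m := by
    intro m σ
    have h0 : (decomposeFin.symm (0, σ)).symm 0 = 0 := (Equiv.symm_apply_eq _).2 (by simp)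
    simp [Perm.mul_def, h0, Fin.cycleRange_symm_zero]
  simp only at h
  obtain rfl : m = m' := by rw [← hm m σ, h, hm m' σ']
  obtain rfl : σ = σ' := by simpa using decomposeFin.symm.injective (mul_right_cancel h)
  rfl

section
variable {A : Type*} [Ring A]

theorem stdPoly_eq_alternatization (n : ℕ) (y : Fin n → A) :
    stdPoly n y = MultilinearMap.alternatization (MultilinearMap.mkPiAlgebraFin ℤ n A) y := by
  simp [stdPoly, MultilinearMap.alternatization_apply, Units.smul_def]

theorem stdPoly_eq_zero_of_apply_eq {n : ℕ} (y : Fin n → A) {i j : Fin n} (h : y i = y j)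
    (hij : i ≠ j) : stdPoly n y = 0 := by
  rw [stdPoly_eq_alternatization]
  exact AlternatingMap.map_eq_zero_of_eq _ y h hij

def stdPolyInsertAt {n : ℕ} (x : A) (y : Fin n → A) (m : Fin (n + 1)) : A :=
  ∑ σ : Perm (Fin n), (sign σ : ℤ) • (List.ofFn (m.insertNth x fun t => y (σ t))).prod

section
variable {n : ℕ} (x : A) (y : Fin n → A)

theorem stdPolyInsertAt_zero : stdPolyInsertAt x y 0 = x * stdPoly n y := by
  rw [stdPolyInsertAt, stdPoly, Finset.mul_sum]
  simp only [Fin.insertNth_zero', List.ofFn_cons, List.prod_cons, mul_smul_comm]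

theorem stdPolyInsertAt_last : stdPolyInsertAt x y (Fin.last n) = stdPoly n y * x := by
  rw [stdPolyInsertAt, stdPoly, Finset.sum_mul]
  simp only [Fin.insertNth_last', List.ofFn_succ', Fin.snoc_castSucc, Fin.snoc_last,
    List.prod_concat, smul_mul_assoc]

theorem stdPoly_cons :
    stdPoly (n + 1) (Fin.cons x y) =
      ∑ m : Fin (n + 1), ((-1 : ℤ) ^ (m : ℕ)) • stdPolyInsertAt x y m := by
  have hword : ∀ (m : Fin (n + 1)) (σ : Perm (Fin n)),
      (fun t => (Fin.cons x y : Fin (n + 1) → A) ((decomposeFin.symm (0, σ) * m.cycleRange) t)) =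
        m.insertNth x fun t => y (σ t) := by
    intro m σ
    refine Fin.eq_insertNth_iff.2 ⟨by simp, funext fun t => ?_⟩
    simp [Fin.removeNth, Fin.cycleRange_succAbove]
  have hsign : ∀ (m : Fin (n + 1)) (σ : Perm (Fin n)),
      (sign (decomposeFin.symm (0, σ) * m.cycleRange) : ℤ) = (-1) ^ (m : ℕ) * sign σ := by
    intro m σ
    simp [decomposeFin.symm_sign, Fin.sign_cycleRange, mul_comm]
  rw [stdPoly, ← Fintype.sum_bijective _ (bijective_decomposeFin_symm_zero_mul_cycleRange n) _ _
    fun _ => rfl, Fintype.sum_prod_type]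
  simp only [hword, hsign, stdPolyInsertAt, Finset.smul_sum, mul_smul]

end

theorem stdPolyInsertAt_castSucc_add_succ {n : ℕ} (x : A) (y : Fin (n + 1) → A)
    (hc : ∀ j, x * y j + y j * x ∈ Set.center A) (k : Fin (n + 1)) :
    stdPolyInsertAt x y k.castSucc + stdPolyInsertAt x y k.succ =
      ((-1 : ℤ) ^ (k : ℕ)) • ∑ σ : Perm (Fin (n + 1)),
        (sign σ : ℤ) • ((x * y (σ 0) + y (σ 0) * x) * (List.ofFn fun t => y (σ t.succ)).prod) := by
  rw [stdPolyInsertAt, stdPolyInsertAt, ← Finset.sum_add_distrib]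
  refine (Finset.sum_congr rfl fun σ _ => (smul_add _ _ _).symm.trans <| congrArg _ <|
    List.prod_ofFn_insertNth_castSucc_add_succ x (fun t => y (σ t)) k (hc _)).trans ?_
  -- `k.cycleRange` sends `k` to `0` and `k.succAbove t` to `t.succ`; its sign is `(-1) ^ k`.
  rw [← Equiv.sum_comp (Equiv.mulRight k.cycleRange), Finset.smul_sum]
  refine Finset.sum_congr rfl fun σ _ => ?_
  simp only [coe_mulRight, Perm.mul_apply, Function.comp_def, Fin.cycleRange_self,
    Fin.cycleRange_succAbove, Perm.sign_mul, Fin.sign_cycleRange, Units.val_mul,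
    Units.val_pow_eq_pow_val, Units.val_neg, Units.val_one]
  rw [mul_comm, mul_smul]

theorem mul_stdPoly_eq_neg_one_pow_smul_stdPoly_mul [IsAddTorsionFree A] {n : ℕ}
    (y : Fin n → A) (i : Fin n) (hc : ∀ j, y i * y j + y j * y i ∈ Set.center A) :
    y i * stdPoly n y = ((-1 : ℤ) ^ (n - 1)) • (stdPoly n y * y i) := by
  obtain ⟨n, rfl⟩ : ∃ m, n = m + 1 := ⟨n - 1, (Nat.succ_pred_eq_of_pos i.pos).symm⟩
  set P := stdPolyInsertAt (y i) y
  obtain ⟨D, hD⟩ : ∃ D, ∀ k : Fin (n + 1), P k.castSucc + P k.succ = ((-1 : ℤ) ^ (k : ℕ)) • D :=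
    ⟨_, stdPolyInsertAt_castSucc_add_succ (y i) y hc⟩
  have hsum : ∑ m : Fin (n + 2), ((-1 : ℤ) ^ (m : ℕ)) • P m = 0 := by
    rw [← stdPoly_cons]
    exact stdPoly_eq_zero_of_apply_eq _ (i := 0) (j := i.succ) rfl (Fin.succ_ne_zero i).symm
  have hends := apply_zero_add_apply_last_eq_zero_of_sum_eq_zero _ D (fun k => by
    rw [Fin.val_succ, Fin.val_castSucc, pow_succ, mul_neg_one, neg_smul, sub_neg_eq_add,
      ← smul_add, hD, smul_smul, ← pow_add, Even.neg_one_pow ⟨_, rfl⟩, one_smul]) hsum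
  rw [Fin.val_zero, pow_zero, one_smul, Fin.val_last, pow_succ, mul_neg_one, neg_smul,
    add_neg_eq_zero] at hends
  rw [← stdPolyInsertAt_zero, ← stdPolyInsertAt_last, Nat.add_sub_cancel]
  exact hends

end

theorem stmt12 (K V : Type*) [Field K] [CharZero K] [AddCommGroup V] [Module K V]
    (Q : QuadraticForm K V) (n : ℕ) (v : Fin n → V) (i : Fin n) :
    CliffordAlgebra.ι Q (v i) * stdPoly n (fun j => CliffordAlgebra.ι Q (v j)) =
      ((-1 : ℤ) ^ (n - 1)) •
        (stdPoly n (fun j => CliffordAlgebra.ι Q (v j)) * CliffordAlgebra.ι Q (v i)) := by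
  have : IsAddTorsionFree (CliffordAlgebra Q) := .of_isTorsionFree K (CliffordAlgebra Q)
  refine mul_stdPoly_eq_neg_one_pow_smul_stdPoly_mul (fun j => CliffordAlgebra.ι Q (v j)) i
    fun j => ?_
  rw [CliffordAlgebra.ι_mul_ι_add_swap]
  exact Set.algebraMap_mem_center _
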